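/- Let A = (a_{ij}) be a symmetric k×k integer matrix and let H = T(u₁, ..., u_k, v) be the free associative graded ℤ-algebra on generators u₁, ..., u_k of degree 2 and v of degree 4, made a graded connected Hopf algebra by declaring each uᵢ primitive and Δv = v⊗1 + 1⊗v + Σ_{i,j} a_{ij} uᵢ⊗uⱼ, extended multiplicatively (this is H_*(ΩΣM⁴;ℤ) for a simply connected 4-manifold M⁴ with intersection form A). If H is isomorphic over ℤ to a primitively generated (Lie-Hopf) Hopf algebra, then there exist an integer k×k matrix Λ with det Λ = ±1 and an integer k×k matrix Γ such that Λᵀ A Λ = −(Γ + Γᵀ). -/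

import Mathlib

/-!
Reduce modulo 2 and kill every generator except one `uᵢ`: this gives `χᵢ : H → 𝔽₂[ε]`,
`uᵢ ↦ ε`. Push `Δ` forward along `χᵢ ⊗ χᵢ` into `𝔽₂[α, γ]/(α², γ²)`. A primitive `x`
goes to `χᵢ(x)(α) + χᵢ(x)(γ)`, where the constant terms cancel, so it lies in the
subalgebra generated by `α + γ`. That subalgebra has no `αγ`-component because
`(α + γ)² = 2αγ = 0`. But `v` goes to `aᵢᵢ αγ`, so if `H` is generated by primitives,
every `aᵢᵢ` is even. A symmetric matrix with even diagonal is `Γ' + Γ'ᵀ` (take `Γ'`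
upper triangular with half the diagonal), and then `Λ = 1`, `Γ = -Γ'` work.
-/

open scoped TensorProduct

noncomputable section

variable (k : ℕ)

/-- The free associative `ℤ`-algebra `T(u₁, …, u_k, v)`;
as an algebra this is `H_*(ΩΣM⁴;ℤ)` for a simply connected closed 4-manifold
`M⁴` with `H₂(M⁴) ≅ ℤᵏ` (Bott–Samelson). -/
abbrev LoopHomM4 : Type := FreeAlgebra ℤ (Fin k ⊕ Unit)

/-- The degree-2 generators `u₁, …, u_k` (a basis of `H₂(M⁴;ℤ)`). -/
def u (i : Fin k) : LoopHomM4 k := FreeAlgebra.ι ℤ (Sum.inl i)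

/-- The degree-4 generator `v` (the fundamental class of `M⁴`). -/
def v : LoopHomM4 k := FreeAlgebra.ι ℤ (Sum.inr ())

/-- The comultiplication of `H_*(ΩΣM⁴;ℤ)` determined by the intersection form
`A`: each `uᵢ` is primitive and `Δv = v⊗1 + 1⊗v + Σ_{i,j} a_{ij} uᵢ⊗uⱼ`. -/
def Δ (A : Matrix (Fin k) (Fin k) ℤ) :
    LoopHomM4 k →ₐ[ℤ]
      @TensorProduct ℤ _ (LoopHomM4 k) (LoopHomM4 k) _ _ Algebra.toModule Algebra.toModule :=
  FreeAlgebra.lift ℤ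
    (Sum.elim
      (fun i => u k i ⊗ₜ[ℤ] 1 + 1 ⊗ₜ[ℤ] u k i)
      (fun _ => v k ⊗ₜ[ℤ] 1 + 1 ⊗ₜ[ℤ] v k +
        ∑ i : Fin k, ∑ j : Fin k, A i j • (u k i ⊗ₜ[ℤ] u k j)))

/-- An element is primitive if `Δa = a⊗1 + 1⊗a`. -/
def IsPrimitive (A : Matrix (Fin k) (Fin k) ℤ) (x : LoopHomM4 k) : Prop :=
  Δ k A x = x ⊗ₜ[ℤ] 1 + 1 ⊗ₜ[ℤ] x


open DualNumber TrivSqZeroExt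

theorem Matrix.IsSymm.exists_eq_add_transpose {n R : Type*} [LinearOrder n] [AddMonoid R]
    {A : Matrix n n R} (hA : A.IsSymm) (hdiag : ∀ i, Even (A i i)) :
    ∃ Γ : Matrix n n R, A = Γ + Γ.transpose := by
  choose c hc using hdiag
  refine ⟨.of fun p q => if p < q then A p q else if p = q then c p else 0, ?_⟩
  ext p q
  simp only [Matrix.add_apply, Matrix.transpose_apply, Matrix.of_apply]
  rcases lt_trichotomy p q with h | rfl | h
  · simp [h, h.ne', not_lt_of_gt h]
  · simp [hc]
  · simp [h, h.ne', not_lt_of_gt h, hA.apply p q]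

namespace DualNumber

/- `K[ε][ε]` is `K[α, γ]/(α², γ²)` with `α = inl ε` and `γ = ε`. -/

def outerAlgHom {K : Type*} [CommSemiring K] : K[ε] →ₐ[K] K[ε][ε] :=
  lift ⟨(Algebra.ofId K _, ε), eps_mul_eps, fun _ => commute_eps_left _⟩

@[simp]
theorem outerAlgHom_eps {K : Type*} [CommSemiring K] : outerAlgHom (ε : K[ε]) = ε :=
  lift_apply_eps _

variable {K : Type*} [CommRing K] [CharP K 2]

theorem inl_eps_add_eps_mul_self : (inl ε + ε : K[ε][ε]) * (inl ε + ε) = 0 := by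
  ext <;> simp [CharTwo.add_self_eq_zero]

def diagAlgHom : K[ε] →ₐ[K] K[ε][ε] :=
  lift ⟨(Algebra.ofId K _, inl ε + ε), inl_eps_add_eps_mul_self,
    fun _ => mul_comm (inl ε + ε : K[ε][ε]) _⟩

theorem snd_snd_diagAlgHom (d : K[ε]) : (diagAlgHom d).snd.snd = 0 := by
  simp [diagAlgHom, lift_apply_apply, Algebra.ofId_apply, algebraMap_eq_inl']

theorem inl_add_outerAlgHom_mem_range_diagAlgHom (d : K[ε]) :
    inl d + outerAlgHom d ∈ (diagAlgHom : K[ε] →ₐ[K] K[ε][ε]).range :=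
  ⟨inr d.snd, by
    ext <;> simp [diagAlgHom, outerAlgHom, lift_apply_apply, Algebra.ofId_apply,
      algebraMap_eq_inl', CharTwo.add_self_eq_zero]⟩

end DualNumber

section

variable {k : ℕ}

local notation "H⊗H" =>
  @TensorProduct ℤ _ (LoopHomM4 k) (LoopHomM4 k) _ _ Algebra.toModule Algebra.toModule

def modTwoAt (i : Fin k) : LoopHomM4 k →ₐ[ℤ] (ZMod 2)[ε] :=
  FreeAlgebra.lift ℤ (Sum.elim (Pi.single i ε) 0)

theorem modTwoAt_u (i j : Fin k) :
    modTwoAt i (u k j) = (Pi.single i ε : Fin k → (ZMod 2)[ε]) j := by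
  simp [modTwoAt, u, Pi.single_apply]

theorem modTwoAt_v (i : Fin k) : modTwoAt i (v k) = 0 := by
  simp [modTwoAt, v]

def tensorModTwoAt (i : Fin k) : H⊗H →ₐ[ℤ] (ZMod 2)[ε][ε] :=
  Algebra.TensorProduct.productMap (S := (ZMod 2)[ε][ε])
    (((inlAlgHom (ZMod 2) (ZMod 2)[ε] (ZMod 2)[ε]).restrictScalars ℤ).comp (modTwoAt i))
    ((outerAlgHom.restrictScalars ℤ).comp (modTwoAt i))

theorem tensorModTwoAt_tmul (i : Fin k) (x y : LoopHomM4 k) :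
    tensorModTwoAt i (x ⊗ₜ[ℤ] y) = inl (modTwoAt i x) * outerAlgHom (modTwoAt i y) :=
  rfl

/- `Δ` and `IsPrimitive` build `⊗ₜ[ℤ]` over the `ℤ`-module structure of an additive group,
which agrees with `Algebra.toModule` only up to unfolding; restating them with the ascription
`: H⊗H` is what lets the `AlgHom` simp lemmas fire. -/
theorem tensorModTwoAt_Δ_of_isPrimitive (i : Fin k) {A : Matrix (Fin k) (Fin k) ℤ}
    {x : LoopHomM4 k} (hx : IsPrimitive k A x) :
    tensorModTwoAt i (Δ k A x) = inl (modTwoAt i x) + outerAlgHom (modTwoAt i x) := by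
  have hΔ : Δ k A x = (x ⊗ₜ[ℤ] 1 : H⊗H) + (1 ⊗ₜ[ℤ] x : H⊗H) := hx
  simp [hΔ, tensorModTwoAt_tmul]

theorem tensorModTwoAt_Δ_v (i : Fin k) (A : Matrix (Fin k) (Fin k) ℤ) :
    tensorModTwoAt i (Δ k A (v k)) = A i i • (inl ε * ε) := by
  have hΔ : Δ k A (v k) = (v k ⊗ₜ[ℤ] 1 : H⊗H) + (1 ⊗ₜ[ℤ] v k : H⊗H) +
      ∑ p, ∑ q, A p q • (u k p ⊗ₜ[ℤ] u k q : H⊗H) :=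
    FreeAlgebra.lift_ι_apply _ _
  rw [hΔ]
  simp [tensorModTwoAt_tmul, modTwoAt_u, modTwoAt_v, Pi.single_apply, apply_ite, ite_mul]

theorem even_diag_of_adjoin_isPrimitive_eq_top {A : Matrix (Fin k) (Fin k) ℤ}
    (hpg : Algebra.adjoin ℤ {x : LoopHomM4 k | IsPrimitive k A x} = ⊤) (i : Fin k) :
    Even (A i i) := by
  have hle : Algebra.adjoin ℤ {x : LoopHomM4 k | IsPrimitive k A x} ≤
      (diagAlgHom.range.restrictScalars ℤ).comap ((tensorModTwoAt i).comp (Δ k A)) :=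
    Algebra.adjoin_le fun x hx => by
      simpa [tensorModTwoAt_Δ_of_isPrimitive i hx] using
        inl_add_outerAlgHom_mem_range_diagAlgHom (modTwoAt i x)
  obtain ⟨d, hd : diagAlgHom d = tensorModTwoAt i (Δ k A (v k))⟩ :=
    hle (hpg ▸ Algebra.mem_top : v k ∈ _)
  have hvd : (diagAlgHom d).snd.snd = (A i i : ZMod 2) := by
    simp [hd, tensorModTwoAt_Δ_v]
  rwa [snd_snd_diagAlgHom, eq_comm, ZMod.intCast_eq_zero_iff_even] at hvd

end

/-- Let `A` be a symmetric `k×k` integer matrix and give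
`H = T(u₁, …, u_k, v)` the Hopf algebra structure above (this is
`H_*(ΩΣM⁴;ℤ)` for a simply connected 4-manifold with intersection form `A`).
If `H` is isomorphic over `ℤ` to a primitively generated (Lie-Hopf) Hopf
algebra — equivalently, if `H` is generated as an algebra by its primitive
elements — then there exist integer `k×k` matrices `Λ`, with `det Λ = ±1`,
and `Γ` such that `Λᵀ A Λ = −(Γ + Γᵀ)`. -/
theorem loopHomM4_lieHopf_necessary (A : Matrix (Fin k) (Fin k) ℤ)
    (hA : A.IsSymm)
    (hpg : Algebra.adjoin ℤ {x : LoopHomM4 k | IsPrimitive k A x} = ⊤) :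
    ∃ Λ Γ : Matrix (Fin k) (Fin k) ℤ,
      (Λ.det = 1 ∨ Λ.det = -1) ∧ Λ.transpose * A * Λ = -(Γ + Γ.transpose) := by
  obtain ⟨Γ, hΓ⟩ := hA.exists_eq_add_transpose (even_diag_of_adjoin_isPrimitive_eq_top hpg)
  refine ⟨1, -Γ, Or.inl Matrix.det_one, ?_⟩
  simp [hΓ, add_comm]

end
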